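/- Let f be integrable on a ball B_R(x_0) and suppose there exist constants C > 0 and α ∈ (0,1] such that for every r ∈ (0,R] and every x ∈ B_{R/2}(x_0), the average over B_r(x) ∩ B_R(x_0) of |f - (f)_{B_r(x)∩B_R(x_0)}| is at most C r^α. Then for Lebesgue-a.e. x, y ∈ B_{R/4}(x_0), |f(x) - f(y)| ≤ C' |x-y|^α with C' depending only on C, n, α. -/

import Mathlib

/-!
At a Lebesgue point `x`, the averages of `f` over the dyadic balls `B(x, 2⁻ᵏ d)` converge to
`f x`. Two consecutive ones differ by at most `2ⁿ` times the mean oscillation on the larger ball,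
hence by `O((2⁻ᵏ d) ^ α)`, and summing the geometric series puts `f x` within `O(d ^ α)` of the
average over `B(x, d)`. For Lebesgue points `x, y` with `d = ‖x - y‖`, both `B(x, d)` and
`B(y, d)` sit inside `B(x, 2d)`, whose average is within `O(d ^ α)` of each of theirs.
-/

open MeasureTheory Metric

open Filter Topology Module Set Measure
open scoped ENNReal

noncomputable def meanOscillation {X : Type*} [MeasurableSpace X] (μ : Measure X) (f : X → ℝ)
    (s : Set X) : ℝ :=
  ⨍ y in s, |f y - ⨍ z in s, f z ∂μ| ∂μ

lemma meanOscillation_nonneg {X : Type*} [MeasurableSpace X] (μ : Measure X) (f : X → ℝ)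
    (s : Set X) : 0 ≤ meanOscillation μ f s := by
  rw [meanOscillation, setAverage_eq]
  exact smul_nonneg (inv_nonneg.2 measureReal_nonneg) (integral_nonneg fun _ => abs_nonneg _)

lemma abs_setAverage_sub_setAverage_le {X : Type*} [MeasurableSpace X] {μ : Measure X}
    {f : X → ℝ} {s t : Set X} {D : ℝ} (hst : s ⊆ t) (hs : μ s ≠ 0) (ht : μ t ≠ ∞)
    (hf : IntegrableOn f t μ) (hD : μ.real t ≤ D * μ.real s) :
    |⨍ y in s, f y ∂μ - ⨍ y in t, f y ∂μ| ≤ D * meanOscillation μ f t := by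
  set c := ⨍ y in t, f y ∂μ
  have hs' : μ s ≠ ∞ := ne_top_of_le_ne_top ht (measure_mono hst)
  have hpos : 0 < μ.real s := ENNReal.toReal_pos hs hs'
  refine le_of_mul_le_mul_left ?_ hpos
  calc μ.real s * |⨍ y in s, f y ∂μ - c| = |∫ y in s, (f y - c) ∂μ| := by
        rw [integral_sub (hf.mono_set hst) (integrableOn_const hs'), setIntegral_const,
          ← measure_smul_setAverage _ hs', smul_eq_mul, smul_eq_mul, ← mul_sub, abs_mul,
          abs_of_pos hpos]
    _ ≤ ∫ y in s, |f y - c| ∂μ := abs_integral_le_integral_abs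
    _ ≤ ∫ y in t, |f y - c| ∂μ :=
        setIntegral_mono_set (hf.sub (integrableOn_const ht)).abs
          (ae_of_all _ fun _ => abs_nonneg _) hst.eventuallyLE
    _ = μ.real t * meanOscillation μ f t := (measure_smul_setAverage _ ht).symm
    _ ≤ μ.real s * (D * meanOscillation μ f t) := by
        rw [← mul_assoc, mul_comm _ D]
        exact mul_le_mul_of_nonneg_right hD (meanOscillation_nonneg μ f t)

lemma meanOscillation_ball_le_of_inter {X : Type*} [PseudoMetricSpace X] [MeasurableSpace X]
    {μ : Measure X} {f : X → ℝ} {x₀ z : X} {R r C α : ℝ}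
    (hosc : ∀ r ∈ Ioc 0 R, ∀ z ∈ ball x₀ (R / 2),
      meanOscillation μ f (ball z r ∩ ball x₀ R) ≤ C * r ^ α)
    (hz : z ∈ ball x₀ (R / 2)) (hr : r ∈ Ioc 0 (R / 2)) :
    meanOscillation μ f (ball z r) ≤ C * r ^ α := by
  have hzR : ball z r ⊆ ball x₀ R := ball_subset_ball' (by linarith [mem_ball.1 hz, hr.2])
  have hrR : r ≤ R := by linarith [hr.2, mem_ball.1 hz, dist_nonneg (x := z) (y := x₀)]
  simpa only [inter_eq_left.2 hzR] using hosc r ⟨hr.1, hrR⟩ z hz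

section AddHaar

variable {E : Type*} [NormedAddCommGroup E] [NormedSpace ℝ E] [FiniteDimensional ℝ E]
  [MeasurableSpace E] [BorelSpace E] (μ : Measure E) [μ.IsAddHaarMeasure]

lemma measureReal_ball_two_mul (x y : E) (r : ℝ) :
    μ.real (ball x (2 * r)) = 2 ^ finrank ℝ E * μ.real (ball y r) := by
  rw [measureReal_def, addHaar_ball_mul_of_pos μ x two_pos, ← addHaar_ball_center μ y,
    ENNReal.toReal_mul, ENNReal.toReal_ofReal (by positivity), measureReal_def]

lemma abs_setAverage_ball_sub_setAverage_le {f : E → ℝ} {x y : E} {r : ℝ} {t : Set E}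
    (hr : 0 < r) (hyt : ball y r ⊆ t) (htx : t ⊆ ball x (2 * r)) (hf : IntegrableOn f t μ) :
    |⨍ z in ball y r, f z ∂μ - ⨍ z in t, f z ∂μ| ≤ 2 ^ finrank ℝ E * meanOscillation μ f t :=
  abs_setAverage_sub_setAverage_le hyt (measure_ball_pos μ y hr).ne'
    (ne_top_of_le_ne_top measure_ball_lt_top.ne (measure_mono htx)) hf
    (measureReal_ball_two_mul μ x y r ▸ measureReal_mono htx)

lemma ae_tendsto_setAverage_ball {f : E → ℝ} {U : Set E} (hU : IsOpen U)
    (hf : IntegrableOn f U μ) :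
    ∀ᵐ x ∂μ, x ∈ U → Tendsto (fun r => ⨍ y in ball x r, f y ∂μ) (𝓝[>] 0) (𝓝 (f x)) := by
  have hg : LocallyIntegrable (U.indicator f) μ :=
    ((integrable_indicator_iff hU.measurableSet).2 hf).locallyIntegrable
  filter_upwards [IsUnifLocDoublingMeasure.ae_tendsto_average (μ := μ) hg 1] with x hx hxU
  have hlim := hx (fun _ => x) id tendsto_id
    (eventually_mem_nhdsWithin.mono fun r hr => mem_closedBall_self (by simpa using hr.le))
  rw [indicator_of_mem hxU] at hlim
  refine hlim.congr' ?_
  filter_upwards [eventually_mem_nhdsWithin,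
    nhdsWithin_le_nhds (eventually_ball_subset (hU.mem_nhds hxU))] with r hr hrU
  calc ⨍ y in closedBall x r, U.indicator f y ∂μ = ⨍ y in ball x r, U.indicator f y ∂μ :=
        setAverage_congr <| ae_eq_set.2
          ⟨by rw [closedBall_sdiff_ball]; exact addHaar_sphere_of_ne_zero μ x (ne_of_gt hr),
           by rw [sdiff_eq_empty.2 ball_subset_closedBall, measure_empty]⟩
    _ = ⨍ y in ball x r, f y ∂μ :=
        setAverage_congr_fun measurableSet_ball
          (ae_of_all _ fun y hy => indicator_of_mem (hrU hy) f)

lemma abs_sub_setAverage_ball_le {f : E → ℝ} {x : E} {d C α : ℝ} (hα : 0 < α) (hd : 0 < d)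
    (hf : IntegrableOn f (ball x d) μ)
    (hosc : ∀ r ∈ Ioc 0 d, meanOscillation μ f (ball x r) ≤ C * r ^ α)
    (hlim : Tendsto (fun r => ⨍ y in ball x r, f y ∂μ) (𝓝[>] 0) (𝓝 (f x))) :
    |f x - ⨍ y in ball x d, f y ∂μ| ≤ 2 ^ finrank ℝ E * C / (1 - 2⁻¹ ^ α) * d ^ α := by
  set ρ : ℕ → ℝ := fun k => d * 2⁻¹ ^ k
  have hρ_pos (k : ℕ) : 0 < ρ k := by positivity
  have hρ_le (k : ℕ) : ρ k ≤ d :=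
    mul_le_of_le_one_right hd.le (pow_le_one₀ (by norm_num) (by norm_num))
  have hρ_succ (k : ℕ) : ρ k = 2 * ρ (k + 1) := by simp only [ρ]; ring
  have hρ_lim : Tendsto ρ atTop (𝓝[>] 0) :=
    tendsto_nhdsWithin_iff.2 ⟨by simpa only [mul_zero] using
      (tendsto_pow_atTop_nhds_zero_of_lt_one (by norm_num : (0:ℝ) ≤ 2⁻¹) (by norm_num)).const_mul d,
      Eventually.of_forall hρ_pos⟩
  have hstep (k : ℕ) : dist (⨍ y in ball x (ρ k), f y ∂μ) (⨍ y in ball x (ρ (k + 1)), f y ∂μ)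
      ≤ 2 ^ finrank ℝ E * C * d ^ α * (2⁻¹ ^ α) ^ k := by
    have hsub : ball x (ρ (k + 1)) ⊆ ball x (ρ k) :=
      ball_subset_ball (by linarith [hρ_succ k, hρ_pos (k + 1)])
    calc _ = |⨍ y in ball x (ρ (k + 1)), f y ∂μ - ⨍ y in ball x (ρ k), f y ∂μ| := dist_comm _ _
      _ ≤ 2 ^ finrank ℝ E * meanOscillation μ f (ball x (ρ k)) :=
          abs_setAverage_ball_sub_setAverage_le μ (hρ_pos (k + 1)) hsub (by rw [← hρ_succ k])
            (hf.mono_set (ball_subset_ball (hρ_le k)))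
      _ ≤ 2 ^ finrank ℝ E * (C * ρ k ^ α) :=
          mul_le_mul_of_nonneg_left (hosc _ ⟨hρ_pos k, hρ_le k⟩) (by positivity)
      _ = 2 ^ finrank ℝ E * C * d ^ α * (2⁻¹ ^ α) ^ k := by
          rw [Real.mul_rpow hd.le (by positivity), ← Real.rpow_pow_comm (by norm_num)]; ring
  have hq : (2⁻¹ : ℝ) ^ α < 1 := Real.rpow_lt_one (by norm_num) (by norm_num) hα
  have := dist_le_of_le_geometric_of_tendsto₀ _ _ hq hstep (hlim.comp hρ_lim)
  simp only [ρ, pow_zero, mul_one] at this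
  rw [abs_sub_comm, ← Real.dist_eq]
  exact this.trans_eq (by ring)

lemma abs_sub_le_of_meanOscillation_le {f : E → ℝ} {x₀ x y : E} {R C α : ℝ} (hα : 0 < α)
    (hf : IntegrableOn f (ball x₀ R) μ)
    (hosc : ∀ r ∈ Ioc 0 R, ∀ z ∈ ball x₀ (R / 2),
      meanOscillation μ f (ball z r ∩ ball x₀ R) ≤ C * r ^ α)
    (hx : x ∈ ball x₀ (R / 4)) (hy : y ∈ ball x₀ (R / 4))
    (hlimx : Tendsto (fun r => ⨍ z in ball x r, f z ∂μ) (𝓝[>] 0) (𝓝 (f x)))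
    (hlimy : Tendsto (fun r => ⨍ z in ball y r, f z ∂μ) (𝓝[>] 0) (𝓝 (f y))) :
    |f x - f y| ≤ 2 * 2 ^ finrank ℝ E * C * ((1 - 2⁻¹ ^ α)⁻¹ + 2 ^ α) * ‖x - y‖ ^ α := by
  rcases eq_or_ne x y with rfl | hxy
  · simp [Real.zero_rpow hα.ne']
  set d := dist x y
  have hd : 0 < d := dist_pos.2 hxy
  have hdR : d < R / 2 := by
    linarith [dist_triangle_right x y x₀, mem_ball.1 hx, mem_ball.1 hy]
  have hcenter (z : E) (hz : z ∈ ball x₀ (R / 4))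
      (hlim : Tendsto (fun r => ⨍ w in ball z r, f w ∂μ) (𝓝[>] 0) (𝓝 (f z))) :
      |f z - ⨍ w in ball z d, f w ∂μ| ≤ 2 ^ finrank ℝ E * C / (1 - 2⁻¹ ^ α) * d ^ α :=
    abs_sub_setAverage_ball_le μ hα hd
      (hf.mono_set (ball_subset_ball' (by linarith [mem_ball.1 hz])))
      (fun r hr => meanOscillation_ball_le_of_inter hosc (ball_subset_ball (by linarith) hz)
        ⟨hr.1, by linarith [hr.2]⟩)
      hlim
  set t := ball x (2 * d) ∩ ball x₀ R
  have hxt : ball x d ⊆ t := fun z hz => ⟨ball_subset_ball (by linarith) hz,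
    ball_subset_ball' (by linarith [mem_ball.1 hx]) hz⟩
  have hyt : ball y d ⊆ t := fun z hz => ⟨ball_subset_ball' (by linarith [dist_comm x y]) hz,
    ball_subset_ball' (by linarith [mem_ball.1 hy]) hz⟩
  have hosc_t : meanOscillation μ f t ≤ C * 2 ^ α * d ^ α := by
    rw [mul_assoc, ← Real.mul_rpow zero_le_two hd.le]
    exact hosc (2 * d) ⟨by positivity, by linarith⟩ x (ball_subset_ball (by linarith) hx)
  have hft : IntegrableOn f t μ := hf.mono_set inter_subset_right
  have h1 := hcenter x hx hlimx
  have h2 := hcenter y hy hlimy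
  have h3 := abs_setAverage_ball_sub_setAverage_le μ hd hxt inter_subset_left hft
  have h4 := abs_setAverage_ball_sub_setAverage_le μ hd hyt inter_subset_left hft
  have h5 : 2 ^ finrank ℝ E * meanOscillation μ f t ≤ 2 ^ finrank ℝ E * (C * 2 ^ α * d ^ α) :=
    by gcongr
  rw [← dist_eq_norm, show 2 * 2 ^ finrank ℝ E * C * ((1 - 2⁻¹ ^ α)⁻¹ + 2 ^ α) * d ^ α
    = 2 * (2 ^ finrank ℝ E * C / (1 - 2⁻¹ ^ α) * d ^ α)
      + 2 * (2 ^ finrank ℝ E * (C * 2 ^ α * d ^ α)) by ring]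
  rw [abs_le] at h1 h2 h3 h4 ⊢
  constructor <;> linarith

end AddHaar

theorem campanato_holder (n : ℕ) (C α : ℝ) (hC : 0 < C) (hα : α ∈ Set.Ioc (0:ℝ) 1) :
    ∃ C' : ℝ, 0 < C' ∧
      ∀ (f : EuclideanSpace ℝ (Fin n) → ℝ) (x₀ : EuclideanSpace ℝ (Fin n)) (R : ℝ),
        0 < R → IntegrableOn f (ball x₀ R) volume →
        (∀ r ∈ Set.Ioc (0:ℝ) R, ∀ x ∈ ball x₀ (R / 2),
          ⨍ y in ball x r ∩ ball x₀ R,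
              |f y - ⨍ z in ball x r ∩ ball x₀ R, f z ∂volume| ∂volume ≤ C * r ^ α) →
        ∀ᵐ x ∂(volume.restrict (ball x₀ (R / 4))),
          ∀ᵐ y ∂(volume.restrict (ball x₀ (R / 4))),
            |f x - f y| ≤ C' * ‖x - y‖ ^ α := by
  have hq : (2⁻¹ : ℝ) ^ α < 1 := Real.rpow_lt_one (by norm_num) (by norm_num) hα.1
  refine ⟨2 * 2 ^ n * C * ((1 - 2⁻¹ ^ α)⁻¹ + 2 ^ α),
    mul_pos (by positivity) (add_pos (inv_pos.2 (sub_pos.2 hq)) (by positivity)), ?_⟩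
  intro f x₀ R hR hf hosc
  have hleb := ae_tendsto_setAverage_ball volume isOpen_ball hf
  have hsub : ball x₀ (R / 4) ⊆ ball x₀ R := ball_subset_ball (by linarith)
  rw [ae_restrict_iff' measurableSet_ball]
  filter_upwards [hleb] with x hlimx hx
  rw [ae_restrict_iff' measurableSet_ball]
  filter_upwards [hleb] with y hlimy hy
  simpa only [finrank_euclideanSpace_fin] using abs_sub_le_of_meanOscillation_le volume hα.1 hf
    hosc hx hy (hlimx (hsub hx)) (hlimy (hsub hy))
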